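/- arXiv:1410.5493 — 6 statements merged into one kernel-verified Lean document; each statement's English description precedes it below -/
import Mathlib

section
/- In the commutative polynomial algebra ℂ[u,v,u⁻¹,v⁻¹] with Poisson bracket determined by {v,u} = uv (extended by the Leibniz rule), the function h = u + v + u⁻¹ + v⁻¹ + u⁻¹v⁻¹ satisfies {h,u} = uv - uv⁻¹ - v⁻¹ and {h,v} = -vu + vu⁻¹ + u⁻¹; i.e., the commutative Kontsevich system is Hamiltonian with Hamiltonian h. -/
/- STATEMENT 0: In the commutative Laurent polynomial algebra ℂ[u^{±1},v^{±1}]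
(modeled as the add-monoid algebra of ℤ × ℤ over ℂ) with the Poisson bracket
determined by {v,u} = uv, the Hamiltonian h = u + v + u⁻¹ + v⁻¹ + u⁻¹v⁻¹
satisfies {h,u} = uv - uv⁻¹ - v⁻¹ and {h,v} = -vu + vu⁻¹ + u⁻¹. -/

noncomputable section

abbrev R0 : Type := AddMonoidAlgebra ℂ (ℤ × ℤ)

def u0 : R0 := AddMonoidAlgebra.single ((1 : ℤ), (0 : ℤ)) 1
def v0 : R0 := AddMonoidAlgebra.single ((0 : ℤ), (1 : ℤ)) 1
def ui0 : R0 := AddMonoidAlgebra.single ((-1 : ℤ), (0 : ℤ)) 1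
def vi0 : R0 := AddMonoidAlgebra.single ((0 : ℤ), (-1 : ℤ)) 1

def h0 : R0 := u0 + v0 + ui0 + vi0 + ui0 * vi0

/-!
For fixed `a`, the Leibniz rule makes `{a, ·}` a derivation, so `{a, h}` is determined by `{a, u}`
and `{a, v}` (its values on `u⁻¹`, `v⁻¹` follow from `u⁻¹u = v⁻¹v = 1`). Skew-symmetry gives
`{u,u} = {v,v} = 0` and `{u,v} = -uv`, and what remains is a ring identity modulo those relations.
-/

def derivationOfLeibniz {K A : Type*} [CommRing K] [CommRing A] [Algebra K A]
    (B : A →ₗ[K] A →ₗ[K] A) (hleib : ∀ a b c : A, B a (b * c) = B a b * c + b * B a c) (a : A) :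
    Derivation K A A :=
  Derivation.mk' (B a) fun b c => by rw [hleib, smul_eq_mul, smul_eq_mul, mul_comm c, add_comm]

instance : IsAddTorsionFree R0 := IsAddTorsionFree.of_isTorsionFree ℂ R0

theorem ui0_mul_u0 : ui0 * u0 = 1 := by
  rw [ui0, u0, AddMonoidAlgebra.single_mul_single, mul_one]
  rfl

theorem vi0_mul_v0 : vi0 * v0 = 1 := by
  rw [vi0, v0, AddMonoidAlgebra.single_mul_single, mul_one]
  rfl

theorem Derivation.apply_h0 (D : Derivation ℂ R0 R0) :
    D h0 = (1 - ui0 ^ 2 - ui0 ^ 2 * vi0) * D u0 + (1 - vi0 ^ 2 - ui0 * vi0 ^ 2) * D v0 := by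
  have hui : D ui0 = -ui0 ^ 2 * D u0 := by simpa using D.leibniz_of_mul_eq_one ui0_mul_u0
  have hvi : D vi0 = -vi0 ^ 2 * D v0 := by simpa using D.leibniz_of_mul_eq_one vi0_mul_v0
  simp only [h0, map_add, Derivation.leibniz, smul_eq_mul, hui, hvi]
  ring

theorem commutative_kontsevich_is_hamiltonian
    (B : R0 →ₗ[ℂ] R0 →ₗ[ℂ] R0)
    (hskew : ∀ a b : R0, B a b = - B b a)
    (hleib : ∀ a b c : R0, B a (b * c) = B a b * c + b * B a c)
    (hvu : B v0 u0 = u0 * v0) :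
    B h0 u0 = u0 * v0 - u0 * vi0 - vi0 ∧
    B h0 v0 = -(v0 * u0) + v0 * ui0 + ui0 := by
  have hh (a : R0) : B a h0 =
      (1 - ui0 ^ 2 - ui0 ^ 2 * vi0) * B a u0 + (1 - vi0 ^ 2 - ui0 * vi0 ^ 2) * B a v0 :=
    (derivationOfLeibniz B hleib a).apply_h0
  have huu : B u0 u0 = 0 := self_eq_neg.mp (hskew u0 u0)
  have hvv : B v0 v0 = 0 := self_eq_neg.mp (hskew v0 v0)
  have huv : B u0 v0 = -(u0 * v0) := by rw [hskew, hvu]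
  constructor
  · rw [hskew, hh, huu, huv]
    linear_combination (-(vi0 * u0) - vi0 * ui0 * u0) * vi0_mul_v0 - vi0 * ui0_mul_u0
  · rw [hskew, hh, hvu, hvv]
    linear_combination (ui0 * v0 + ui0 * vi0 * v0) * ui0_mul_u0 + ui0 * vi0_mul_v0
end
end

section
/- The derivation D of the free group algebra A = ℂ⟨u^{±1}, v^{±1}⟩ defined on generators by D(u) = uv - uv⁻¹ - v⁻¹ and D(v) = -vu + vu⁻¹ + u⁻¹ annihilates the group commutator: D(u v u⁻¹ v⁻¹) = 0. -/
/- STATEMENT 2: Any derivation D of the free group algebra A = ℂ⟨u^{±1},v^{±1}⟩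
with D(u) = uv - uv⁻¹ - v⁻¹ and D(v) = -vu + vu⁻¹ + u⁻¹ annihilates the group
commutator: D(u v u⁻¹ v⁻¹) = 0. -/

noncomputable section

abbrev A : Type := MonoidAlgebra ℂ (FreeGroup Bool)

def u : A := MonoidAlgebra.of ℂ (FreeGroup Bool) (FreeGroup.of false)
def v : A := MonoidAlgebra.of ℂ (FreeGroup Bool) (FreeGroup.of true)
def ui : A := MonoidAlgebra.of ℂ (FreeGroup Bool) (FreeGroup.of false)⁻¹
def vi : A := MonoidAlgebra.of ℂ (FreeGroup Bool) (FreeGroup.of true)⁻¹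

theorem kontsevich_derivation_annihilates_commutator
    (D : A →ₗ[ℂ] A)
    (hD : ∀ a b : A, D (a * b) = D a * b + a * D b)
    (hu : D u = u * v - u * vi - vi)
    (hv : D v = -(v * u) + v * ui + ui) :
    D (u * v * ui * vi) = 0 := by
  have huui : u * ui = 1 := by
    rw [u, ui, ← map_mul, mul_inv_cancel, map_one]
  have huiu : ui * u = 1 := by
    rw [u, ui, ← map_mul, inv_mul_cancel, map_one]
  have hvvi : v * vi = 1 := by
    rw [v, vi, ← map_mul, mul_inv_cancel, map_one]
  have hviv : vi * v = 1 := by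
    rw [v, vi, ← map_mul, inv_mul_cancel, map_one]
  have h1 : D 1 = 0 := by
    have h := hD 1 1
    simp only [one_mul, mul_one] at h
    exact (left_eq_add.mp h)
  have hDui : D ui = -(ui * (D u * ui)) := by
    have h0 : D u * ui + u * D ui = 0 := by
      rw [← hD, huui, h1]
    have h2 : u * D ui = -(D u * ui) := by
      exact eq_neg_of_add_eq_zero_right h0
    calc D ui = (ui * u) * D ui := by rw [huiu, one_mul]
      _ = ui * (u * D ui) := by rw [mul_assoc]
      _ = -(ui * (D u * ui)) := by rw [h2, mul_neg]
  have hDvi : D vi = -(vi * (D v * vi)) := by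
    have h0 : D v * vi + v * D vi = 0 := by
      rw [← hD, hvvi, h1]
    have h2 : v * D vi = -(D v * vi) := by
      exact eq_neg_of_add_eq_zero_right h0
    calc D vi = (vi * v) * D vi := by rw [hviv, one_mul]
      _ = vi * (v * D vi) := by rw [mul_assoc]
      _ = -(vi * (D v * vi)) := by rw [h2, mul_neg]
  have r1 : ∀ x : A, u * (ui * x) = x := fun x => by rw [← mul_assoc, huui, one_mul]
  have r2 : ∀ x : A, ui * (u * x) = x := fun x => by rw [← mul_assoc, huiu, one_mul]
  have r3 : ∀ x : A, v * (vi * x) = x := fun x => by rw [← mul_assoc, hvvi, one_mul]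
  have r4 : ∀ x : A, vi * (v * x) = x := fun x => by rw [← mul_assoc, hviv, one_mul]
  rw [hD, hD, hD, hu, hv, hDui, hDvi, hu, hv]
  simp only [mul_sub, sub_mul, mul_add, add_mul, mul_neg, neg_mul, neg_neg, neg_add,
    mul_one, one_mul, mul_assoc, r1, r2, r3, r4, huui, huiu, hvvi, hviv]
  abel
end
end

section
/- For the derivation D of A = ℂ⟨u^{±1},v^{±1}⟩ given by D(u) = uv - uv⁻¹ - v⁻¹ and D(v) = -vu + vu⁻¹ + u⁻¹, the element h = u + v + u⁻¹ + v⁻¹ + u⁻¹v⁻¹ satisfies the Lax equation D(h) = [h, M] with M = v + u⁻¹, where [a,b] = ab - ba. -/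
/- STATEMENT 4: For the Kontsevich derivation D of A = ℂ⟨u^{±1},v^{±1}⟩,
the element h = u + v + u⁻¹ + v⁻¹ + u⁻¹v⁻¹ satisfies the Lax equation
D(h) = [h, M] with M = v + u⁻¹. -/

noncomputable section

def h : A := u + v + ui + vi + ui * vi
def M : A := v + ui

/-! Differentiating `a * a⁻¹ = 1` gives `D(a⁻¹) = -a⁻¹ D(a) a⁻¹`, so `D h` is determined by `D u`
and `D v`. Expanding both sides of the Lax equation in the group algebra, the products
`u u⁻¹`, `v v⁻¹` cancel and the remaining words agree term by term. -/

section LeibnizMap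

variable {R : Type*} [Ring R] {D : R → R} (hD : ∀ a b : R, D (a * b) = D a * b + a * D b)
include hD

theorem map_one_of_leibniz : D 1 = 0 := by
  simpa using hD 1 1

theorem map_inverse_of_leibniz {a b : R} (hab : a * b = 1) (hba : b * a = 1) :
    D b = -(b * D a * b) := by
  have h0 : D a * b + a * D b = 0 := by rw [← hD, hab, map_one_of_leibniz hD]
  have h1 : b * D a * b + D b = 0 := by
    simpa [mul_add, ← mul_assoc, hba] using congrArg (b * ·) h0
  exact eq_neg_of_add_eq_zero_left (by rwa [add_comm])

end LeibnizMap

namespace MonoidAlgebra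

variable {k G : Type*} [CommSemiring k] [Group G]

theorem of_mul_of_inv (g : G) : of k G g * of k G g⁻¹ = 1 := by
  rw [← map_mul, mul_inv_cancel, map_one]

theorem of_inv_mul_of (g : G) : of k G g⁻¹ * of k G g = 1 := by
  rw [← map_mul, inv_mul_cancel, map_one]

theorem of_inv_mul_of_mul (g : G) (x : MonoidAlgebra k G) :
    of k G g⁻¹ * (of k G g * x) = x := by
  rw [← mul_assoc, of_inv_mul_of, one_mul]

end MonoidAlgebra

theorem kontsevich_lax_equation
    (D : A →ₗ[ℂ] A)
    (hD : ∀ a b : A, D (a * b) = D a * b + a * D b)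
    (hu : D u = u * v - u * vi - vi)
    (hv : D v = -(v * u) + v * ui + ui) :
    D h = h * M - M * h := by
  have hDui : D ui = -(ui * D u * ui) := map_inverse_of_leibniz hD
    (MonoidAlgebra.of_mul_of_inv _) (MonoidAlgebra.of_inv_mul_of _)
  have hDvi : D vi = -(vi * D v * vi) := map_inverse_of_leibniz hD
    (MonoidAlgebra.of_mul_of_inv _) (MonoidAlgebra.of_inv_mul_of _)
  rw [h, M, map_add, map_add, map_add, map_add, hD, hDui, hDvi, hu, hv]
  simp only [u, v, ui, vi, mul_add, add_mul, mul_sub, sub_mul, neg_mul, mul_neg, neg_neg,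
    neg_add, neg_sub, mul_assoc, MonoidAlgebra.of_mul_of_inv, MonoidAlgebra.of_inv_mul_of,
    MonoidAlgebra.of_inv_mul_of_mul, mul_one]
  abel
end
end

section
/- For the Kontsevich derivation D of A and h = u + v + u⁻¹ + v⁻¹ + u⁻¹v⁻¹, for every k ≥ 1 the element D(h^k) lies in the linear span [A,A] of commutators; equivalently, the image of h^k in the cyclic space A/[A,A] is a constant of motion. -/
/- STATEMENT 5: For the Kontsevich derivation D and h = u + v + u⁻¹ + v⁻¹ + u⁻¹v⁻¹,
for every k ≥ 1 the element D(h^k) lies in the span [A,A] of commutators, i.e. the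
image of h^k in the cyclic space A/[A,A] is a constant of motion. -/

noncomputable section

/-- The span of commutators [A,A]. -/
def commSpan : Submodule ℂ A := Submodule.span ℂ {x : A | ∃ a b : A, x = a * b - b * a}

theorem kontsevich_trace_integrals
    (D : A →ₗ[ℂ] A)
    (hD : ∀ a b : A, D (a * b) = D a * b + a * D b)
    (hu : D u = u * v - u * vi - vi)
    (hv : D v = -(v * u) + v * ui + ui) :
    ∀ k : ℕ, 1 ≤ k → D (h ^ k) ∈ commSpan := by
  have huui : u * ui = 1 := by rw [u, ui, ← map_mul, mul_inv_cancel, map_one]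
  have huiu : ui * u = 1 := by rw [u, ui, ← map_mul, inv_mul_cancel, map_one]
  have hvvi : v * vi = 1 := by rw [v, vi, ← map_mul, mul_inv_cancel, map_one]
  have hviv : vi * v = 1 := by rw [v, vi, ← map_mul, inv_mul_cancel, map_one]
  have e1 : ∀ x : A, u * (ui * x) = x := fun x => by rw [← mul_assoc, huui, one_mul]
  have e2 : ∀ x : A, ui * (u * x) = x := fun x => by rw [← mul_assoc, huiu, one_mul]
  have e3 : ∀ x : A, v * (vi * x) = x := fun x => by rw [← mul_assoc, hvvi, one_mul]
  have e4 : ∀ x : A, vi * (v * x) = x := fun x => by rw [← mul_assoc, hviv, one_mul]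
  have hD1 : D 1 = 0 := by
    have := hD 1 1
    simp only [one_mul, mul_one] at this
    have h2 : D 1 + 0 = D 1 + D 1 := by rw [add_zero]; exact this
    exact (add_left_cancel h2).symm
  have hui : D ui = -(ui * (D u * ui)) := by
    have h0 : D u * ui + u * D ui = 0 := by rw [← hD, huui, hD1]
    have h2 : u * D ui = -(D u * ui) := eq_neg_of_add_eq_zero_right h0
    calc D ui = ui * (u * D ui) := by rw [e2]
    _ = -(ui * (D u * ui)) := by rw [h2, mul_neg]
  have hvi : D vi = -(vi * (D v * vi)) := by
    have h0 : D v * vi + v * D vi = 0 := by rw [← hD, hvvi, hD1]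
    have h2 : v * D vi = -(D v * vi) := eq_neg_of_add_eq_zero_right h0
    calc D vi = vi * (v * D vi) := by rw [e4]
    _ = -(vi * (D v * vi)) := by rw [h2, mul_neg]
  set w : A := v + ui with hw
  have key : D h = h * w - w * h := by
    rw [h, hw]
    rw [map_add, map_add, map_add, map_add, hD ui vi, hu, hv, hui, hvi, hu, hv]
    simp only [mul_add, add_mul, sub_mul, mul_sub, neg_mul, mul_neg, neg_neg, neg_add,
      neg_sub, mul_assoc, e1, e2, e3, e4, huui, huiu, hvvi, hviv, mul_one, one_mul]
    noncomm_ring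
  have main : ∀ n : ℕ, D (h ^ (n + 1)) = h ^ (n + 1) * w - w * h ^ (n + 1) := by
    intro n
    induction n with
    | zero => simpa using key
    | succ m ih =>
      rw [pow_succ, hD, ih, key, ← pow_succ]
      noncomm_ring [pow_succ]
  intro k hk
  obtain ⟨n, rfl⟩ := Nat.exists_eq_add_of_le hk
  rw [add_comm 1 n, main n]
  exact Submodule.subset_span ⟨h ^ (n + 1), w, rfl⟩
end
end

section
/- With the Kontsevich double bracket on A = ℂ⟨u^{±1},v^{±1}⟩ and c = uvu⁻¹v⁻¹, the following hold: ⟨⟨u, c⟩⟩ = uv ⊗ v⁻¹ - uvu ⊗ u⁻¹v⁻¹ = (1⊗u)r - r(u⊗1) and ⟨⟨v, c⟩⟩ = (1⊗v)r - r(v⊗1), where r = uv ⊗ u⁻¹v⁻¹. -/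
open scoped TensorProduct

noncomputable section

/-- The structure of a Kontsevich double bracket on A: a bilinear map
A × A → A ⊗ A satisfying both Leibniz rules and the prescribed values on the
generators u, v. -/
structure KontsevichBracket (db : A →ₗ[ℂ] A →ₗ[ℂ] A ⊗[ℂ] A) : Prop where
  outer : ∀ a b c : A,
    db a (b * c) = db a b * ((1 : A) ⊗ₜ[ℂ] c) + (b ⊗ₜ[ℂ] (1 : A)) * db a c
  inner : ∀ a b c : A,
    db (a * b) c = db a c * (b ⊗ₜ[ℂ] (1 : A)) + ((1 : A) ⊗ₜ[ℂ] a) * db b c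
  huv : db u v = -((v * u) ⊗ₜ[ℂ] (1 : A))
  hvu : db v u = (u * v) ⊗ₜ[ℂ] (1 : A)
  huu : db u u = 0
  hvv : db v v = 0

/- STATEMENT 11: With c = uvu⁻¹v⁻¹ and r = uv ⊗ u⁻¹v⁻¹, the Kontsevich double
bracket satisfies ⟨⟨u,c⟩⟩ = uv ⊗ v⁻¹ - uvu ⊗ u⁻¹v⁻¹ = (1⊗u)r - r(u⊗1) and
⟨⟨v,c⟩⟩ = (1⊗v)r - r(v⊗1). -/

def c : A := u * v * ui * vi
def r : A ⊗[ℂ] A := (u * v) ⊗ₜ[ℂ] (ui * vi)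

lemma uui : u * ui = 1 := by simp [u, ui, ← map_mul, MonoidAlgebra.one_def]
lemma uiu : ui * u = 1 := by simp [u, ui, ← map_mul, MonoidAlgebra.one_def]
lemma vvi : v * vi = 1 := by simp [v, vi, ← map_mul, MonoidAlgebra.one_def]
lemma viv : vi * v = 1 := by simp [v, vi, ← map_mul, MonoidAlgebra.one_def]

lemma one_tmul_one : ((1:A) ⊗ₜ[ℂ] (1:A)) = (1 : A ⊗[ℂ] A) := rfl


lemma mul_neg' (a b : A ⊗[ℂ] A) : a * -b = -(a * b) := mul_neg a b
lemma neg_mul' (a b : A ⊗[ℂ] A) : -a * b = -(a * b) := neg_mul a b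

lemma cancel_left (a b : A) (h : a * b = 1) (x y : A ⊗[ℂ] A)
    (hx : (b ⊗ₜ[ℂ] (1:A)) * x = y) : x = (a ⊗ₜ[ℂ] (1:A)) * y := by
  rw [← hx, ← mul_assoc, Algebra.TensorProduct.tmul_mul_tmul, h, mul_one,
    one_tmul_one, one_mul]

theorem kontsevich_bracket_with_casimir
    (db : A →ₗ[ℂ] A →ₗ[ℂ] A ⊗[ℂ] A) (hK : KontsevichBracket db) :
    db u c = (u * v) ⊗ₜ[ℂ] vi - (u * v * u) ⊗ₜ[ℂ] (ui * vi) ∧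
    db u c = ((1 : A) ⊗ₜ[ℂ] u) * r - r * (u ⊗ₜ[ℂ] (1 : A)) ∧
    db v c = ((1 : A) ⊗ₜ[ℂ] v) * r - r * (v ⊗ₜ[ℂ] (1 : A)) := by
  have db_one : ∀ a : A, db a 1 = 0 := by
    intro a
    have h := hK.outer a 1 1
    rw [one_mul, one_tmul_one, mul_one, one_mul] at h
    have h2 : db a 1 + 0 = db a 1 + db a 1 := by rw [add_zero]; exact h
    exact (add_left_cancel h2).symm
  -- db u ui = 0
  have hu_ui : db u ui = 0 := by
    have h := hK.outer u u ui
    rw [uui, db_one, hK.huu, zero_mul, zero_add] at h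
    have h2 := cancel_left ui u uiu _ _ h.symm
    rw [h2, mul_zero]
  -- db u vi = u ⊗ vi
  have hu_vi : db u vi = u ⊗ₜ[ℂ] vi := by
    have h := hK.outer u v vi
    rw [vvi, db_one, hK.huv] at h
    have h2 : (v ⊗ₜ[ℂ] (1:A)) * db u vi = (v * u) ⊗ₜ[ℂ] vi := by
      rw [eq_neg_of_add_eq_zero_right h.symm, neg_mul', neg_neg,
        Algebra.TensorProduct.tmul_mul_tmul, mul_one, one_mul]
    have h4 := cancel_left vi v viv _ _ h2
    rw [h4, Algebra.TensorProduct.tmul_mul_tmul, one_mul, ← mul_assoc, viv,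
      one_mul]
  -- db v vi = 0
  have hv_vi : db v vi = 0 := by
    have h := hK.outer v v vi
    rw [vvi, db_one, hK.hvv, zero_mul, zero_add] at h
    have h2 := cancel_left vi v viv _ _ h.symm
    rw [h2, mul_zero]
  -- db v ui = -(v ⊗ ui)
  have hv_ui : db v ui = -(v ⊗ₜ[ℂ] ui) := by
    have h := hK.outer v u ui
    rw [uui, db_one, hK.hvu] at h
    have h2 : (u ⊗ₜ[ℂ] (1:A)) * db v ui = -((u * v) ⊗ₜ[ℂ] ui) := by
      rw [eq_neg_of_add_eq_zero_right h.symm,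
        Algebra.TensorProduct.tmul_mul_tmul, mul_one, one_mul]
    have h4 := cancel_left ui u uiu _ _ h2
    rw [h4, mul_neg', Algebra.TensorProduct.tmul_mul_tmul, one_mul, ← mul_assoc,
      uiu, one_mul]
  -- db u (u*v)
  have e1 : db u (u * v) = -((u * v * u) ⊗ₜ[ℂ] (1:A)) := by
    rw [hK.outer u u v, hK.huu, zero_mul, zero_add, hK.huv, mul_neg',
      Algebra.TensorProduct.tmul_mul_tmul, mul_one, mul_assoc]
  have e2 : db u (u * v * ui) = -((u * v * u) ⊗ₜ[ℂ] ui) := by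
    rw [hK.outer u (u * v) ui, hu_ui, mul_zero, add_zero, e1, neg_mul',
      Algebra.TensorProduct.tmul_mul_tmul, mul_one, one_mul]
  have e3 : db u c = (u * v) ⊗ₜ[ℂ] vi - (u * v * u) ⊗ₜ[ℂ] (ui * vi) := by
    rw [show c = (u * v * ui) * vi from rfl, hK.outer u (u * v * ui) vi, e2,
      hu_vi, neg_mul', Algebra.TensorProduct.tmul_mul_tmul,
      Algebra.TensorProduct.tmul_mul_tmul, mul_one, one_mul,
      mul_assoc (u * v) ui u, uiu, mul_one, neg_add_eq_sub]
  -- db v parts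
  have f1 : db v (u * v) = (u * v) ⊗ₜ[ℂ] v := by
    rw [hK.outer v u v, hK.hvv, mul_zero, add_zero, hK.hvu,
      Algebra.TensorProduct.tmul_mul_tmul, mul_one, one_mul]
  have f2 : db v (u * v * ui) = (u * v) ⊗ₜ[ℂ] (v * ui) - (u * v * v) ⊗ₜ[ℂ] ui := by
    rw [hK.outer v (u * v) ui, f1, hv_ui, Algebra.TensorProduct.tmul_mul_tmul,
      mul_one, mul_neg', Algebra.TensorProduct.tmul_mul_tmul, one_mul,
      sub_eq_add_neg]
  have f3 : db v c = (u * v) ⊗ₜ[ℂ] (v * ui * vi) - (u * v * v) ⊗ₜ[ℂ] (ui * vi) := by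
    rw [show c = (u * v * ui) * vi from rfl, hK.outer v (u * v * ui) vi, f2,
      hv_vi, mul_zero, add_zero, sub_mul, Algebra.TensorProduct.tmul_mul_tmul,
      Algebra.TensorProduct.tmul_mul_tmul, mul_one, mul_one]
  refine ⟨e3, ?_, ?_⟩
  · rw [e3, r, Algebra.TensorProduct.tmul_mul_tmul,
      Algebra.TensorProduct.tmul_mul_tmul, one_mul, mul_one, ← mul_assoc, uui,
      one_mul]
  · rw [f3, r, Algebra.TensorProduct.tmul_mul_tmul,
      Algebra.TensorProduct.tmul_mul_tmul, one_mul, mul_one, mul_assoc v ui vi]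
end
end

section
/- The elements π(h^k), k ≥ 1, where π : A → A/[A,A] is the quotient map and h = u + v + u⁻¹ + v⁻¹ + u⁻¹v⁻¹, are linearly independent over ℂ in the cyclic space A/[A,A]. -/
/-!
Every algebra map `A → ℂ` vanishes on commutators, so it factors through `A/[A,A]`. The
characters of `F` sending `u ↦ z`, `v ↦ 1` (`z ≠ 0`) send `h` to `z + 2 + 2 / z`, which takes
every complex value `t`. Applying them to a linear relation among the `π(h^k)` therefore gives a
polynomial in `t` vanishing on all of `ℂ`, hence the zero polynomial.
-/

noncomputable section

theorem span_commutators_le_ker {R A B : Type*} [CommSemiring R] [Ring A] [Algebra R A]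
    [CommRing B] [Algebra R B] (f : A →ₐ[R] B) :
    Submodule.span R {x : A | ∃ a b : A, x = a * b - b * a} ≤ LinearMap.ker f.toLinearMap := by
  rw [Submodule.span_le]
  rintro x ⟨a, b, rfl⟩
  simp [mul_comm]

open Polynomial in
theorem linearIndependent_fun_pow (K : Type*) [CommRing K] [IsDomain K] [Infinite K] :
    LinearIndependent K (fun k : ℕ => fun t : K => t ^ k) := by
  have hinj : LinearMap.ker (LinearMap.pi (fun t : K => leval t)) = ⊥ :=
    LinearMap.ker_eq_bot.mpr fun p q hpq => Polynomial.funext fun t => congrFun hpq t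
  have hmono : (LinearMap.pi fun t : K => leval t) ∘ basisMonomials K = fun k t => t ^ k := by
    funext k t
    simp
  exact hmono ▸ (basisMonomials K).linearIndependent.map' _ hinj

theorem linearIndependent_mkQ_pow {K A : Type*} [CommRing K] [IsDomain K] [Infinite K] [Ring A]
    [Algebra K A] (N : Submodule K A) (a : A)
    (hchar : ∀ t : K, ∃ f : A →ₐ[K] K, N ≤ LinearMap.ker f.toLinearMap ∧ f a = t) :
    LinearIndependent K (fun k : ℕ => N.mkQ (a ^ k)) := by
  choose f hN hfa using hchar
  let ev : A ⧸ N →ₗ[K] K → K := LinearMap.pi fun t => N.liftQ (f t).toLinearMap (hN t)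
  refine .of_comp ev ?_
  convert linearIndependent_fun_pow K using 1
  funext k t
  simp [ev, hfa]

theorem exists_ne_zero_add_add_div_eq {K : Type*} [Field K] [IsAlgClosed K] [NeZero (2 : K)]
    (b : K) {c : K} (hc : c ≠ 0) (t : K) : ∃ z ≠ 0, z + b + c / z = t := by
  obtain ⟨z, hz⟩ := exists_quadratic_eq_zero (a := 1) (b := b - t) (c := c) one_ne_zero
    (IsAlgClosed.exists_eq_mul_self _)
  have hz0 : z ≠ 0 := by rintro rfl; simp_all
  refine ⟨z, hz0, ?_⟩
  field_simp
  linear_combination hz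

def uCharacter (z : ℂˣ) : A →ₐ[ℂ] ℂ :=
  MonoidAlgebra.lift ℂ ℂ (FreeGroup Bool)
    ((Units.coeHom ℂ).comp (FreeGroup.lift fun b : Bool => if b then 1 else z))

theorem uCharacter_h (z : ℂˣ) : uCharacter z h = z + 2 + 2 / z := by
  have hgen : uCharacter z h = z + 1 + (z : ℂ)⁻¹ + 1 + (z : ℂ)⁻¹ := by
    simp [uCharacter, h, u, v, ui, vi]
  rw [hgen]
  ring

theorem hamiltonians_linearly_independent :
    LinearIndependent ℂ (fun k : ℕ => commSpan.mkQ (h ^ (k + 1))) := by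
  refine (linearIndependent_mkQ_pow commSpan h fun t => ?_).comp (· + 1) (add_left_injective 1)
  obtain ⟨z, hz0, hz⟩ := exists_ne_zero_add_add_div_eq 2 two_ne_zero t
  exact ⟨uCharacter (.mk0 z hz0), span_commutators_le_ker _, by rw [uCharacter_h, Units.val_mk0, hz]⟩
end
end
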